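/- A finite full binary tree is quasi-balanced if and only if it is monotone, i.e., every subtree S (with immediate subtrees S0, S1) satisfies E_S ≥ max(E_{S0}, E_{S1}). -/

import Mathlib

/-- Finite full rooted ordered binary trees with internal nodes labeled by `X`. -/
inductive BTree (X : Type) : Type
  | leaf : BTree X
  | node : X → BTree X → BTree X → BTree X

namespace BTree

variable {X : Type}

/-- The branches (root-to-leaf paths) of a tree, each recorded as the list of
edge labels (`false` = left/0, `true` = right/1) along the path. -/
def branches : BTree X → List (List Bool)
  | leaf => [[]]
  | node _ l r => (branches l).map (List.cons false) ++ (branches r).map (List.cons true)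

/-- The expected length of a uniformly random branch:
`E T = ∑_{b ∈ B(T)} |b| · 2^{-|b|}`. -/
noncomputable def E (t : BTree X) : ℝ :=
  ((branches t).map (fun b => (b.length : ℝ) * (2 : ℝ) ^ (-(b.length : ℤ)))).sum

/-- The internal-node positions of the tree, as paths from the root. -/
def nodePaths : BTree X → List (List Bool)
  | leaf => []
  | node _ l r =>
      [] :: ((nodePaths l).map (List.cons false) ++ (nodePaths r).map (List.cons true))

/-- `w` is a weight function for `t`: at every internal node, the two outgoing
edges get nonnegative weights summing to `1`. -/
def IsWeightFn (t : BTree X) (w : List Bool → Bool → ℝ) : Prop :=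
  ∀ p ∈ nodePaths t, 0 ≤ w p false ∧ 0 ≤ w p true ∧ w p false + w p true = 1

/-- The total weight of a branch `b`: the sum of the weights of its edges. -/
def branchWeight (w : List Bool → Bool → ℝ) (b : List Bool) : ℝ :=
  ((List.range b.length).map (fun i => w (b.take i) (b.getD i false))).sum

/-- The subtree of `t` rooted at the end of the path `p` (junk value `leaf`
if the path leaves the tree). -/
def subtreeAt : BTree X → List Bool → BTree X
  | t, [] => t
  | leaf, _ :: _ => leaf
  | node _ l r, d :: p => subtreeAt (if d then r else l) p

/-- A tree is quasi-balanced if some weight function gives all branches the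
same total weight `E T / 2`. -/
def QuasiBalanced (t : BTree X) : Prop :=
  ∃ w : List Bool → Bool → ℝ, IsWeightFn t w ∧ ∀ b ∈ branches t, branchWeight w b = E t / 2

/-- A tree is monotone if every subtree's expected branch length is at least
that of each of its immediate subtrees. -/
def IsMonotone : BTree X → Prop
  | leaf => True
  | node x l r =>
      E l ≤ E (node x l r) ∧ E r ≤ E (node x l r) ∧ IsMonotone l ∧ IsMonotone r

/-- The minimum length of a branch of the tree. -/
def minBranch : BTree X → ℕ
  | leaf => 0
  | node _ l r => 1 + min (minBranch l) (minBranch r)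

/-- The sequence of labeled examples along the path `p`: at a node labeled `x`,
following the edge labeled `d` produces the example `(x, d)`. -/
def examplesAlong : BTree X → List Bool → List (X × Bool)
  | leaf, _ => []
  | node _ _ _, [] => []
  | node x l r, d :: p => (x, d) :: examplesAlong (if d then r else l) p

end BTree

/-! Weight each branch `b` by `2^{-|b|}`, its probability under a uniformly random walk from
the root. Since `E T = 1 + (E T₀ + E T₁) / 2` and the two edge weights at every node sum to `1`,
the expected weight of a random branch is `E T / 2` for *every* weight function. So a constant
branch weight must be `E T / 2`, and if the root edges of a quasi-balanced tree carry `w₀, w₁`,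
its subtrees are quasi-balanced with `E Tᵢ = E T - 2 wᵢ ≤ E T`. Conversely, for a monotone tree
the root weights `wᵢ = (E T - E Tᵢ) / 2` are nonnegative, sum to `1` by the same recursion, and
extend the weight functions of the subtrees. -/

namespace BTree

variable {X : Type}

noncomputable def branchExpect (t : BTree X) (f : List Bool → ℝ) : ℝ :=
  ((branches t).map (fun b => f b * (2 : ℝ) ^ (-(b.length : ℤ)))).sum

lemma E_eq_branchExpect (t : BTree X) : E t = branchExpect t (fun b => b.length) := rfl

lemma branchExpect_leaf (f : List Bool → ℝ) : branchExpect (leaf : BTree X) f = f [] := by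
  simp [branchExpect, branches]

lemma branchExpect_node (x : X) (l r : BTree X) (f : List Bool → ℝ) :
    branchExpect (node x l r) f =
      (branchExpect l (fun b => f (false :: b)) + branchExpect r (fun b => f (true :: b))) / 2 := by
  have shift : ∀ (d : Bool) (L : List (List Bool)),
      ((L.map (List.cons d)).map (fun b => f b * (2 : ℝ) ^ (-(b.length : ℤ)))).sum
        = (L.map (fun b => f (d :: b) * (2 : ℝ) ^ (-(b.length : ℤ)))).sum / 2 := by
    intro d L
    rw [List.map_map, div_eq_mul_inv, ← List.sum_map_mul_right]
    congr 1
    refine List.map_congr_left fun b _ => ?_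
    simp only [Function.comp_apply, List.length_cons, Nat.cast_succ, neg_add]
    rw [zpow_add₀ two_ne_zero, zpow_neg_one, mul_assoc]
  simp only [branchExpect, branches, List.map_append, List.sum_append, shift]
  ring

lemma branchExpect_congr {t : BTree X} {f g : List Bool → ℝ} (h : ∀ b ∈ branches t, f b = g b) :
    branchExpect t f = branchExpect t g :=
  congrArg List.sum (List.map_congr_left fun b hb => by rw [h b hb])

lemma branchExpect_add (t : BTree X) (f g : List Bool → ℝ) :
    branchExpect t (fun b => f b + g b) = branchExpect t f + branchExpect t g := by
  simp only [branchExpect, add_mul, List.sum_map_add]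

lemma branchExpect_const (t : BTree X) (c : ℝ) : branchExpect t (fun _ => c) = c := by
  induction t with
  | leaf => exact branchExpect_leaf _
  | node x l r ihl ihr => rw [branchExpect_node, ihl, ihr]; ring

lemma E_leaf : E (leaf : BTree X) = 0 := by simp [E, branches]

lemma E_node (x : X) (l r : BTree X) : E (node x l r) = 1 + (E l + E r) / 2 := by
  simp only [E_eq_branchExpect, branchExpect_node, List.length_cons, Nat.cast_succ,
    branchExpect_add, branchExpect_const]
  ring

lemma branchWeight_cons (w : List Bool → Bool → ℝ) (d : Bool) (b : List Bool) :
    branchWeight w (d :: b) = w [] d + branchWeight (fun p => w (d :: p)) b := by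
  simp only [branchWeight, List.length_cons, List.range_succ_eq_map, List.map_cons,
    List.map_map, List.sum_cons, List.take_zero, List.getD_cons_zero]
  rfl

lemma forall_mem_branches_node {x : X} {l r : BTree X} {P : List Bool → Prop} :
    (∀ b ∈ branches (node x l r), P b) ↔
      (∀ b ∈ branches l, P (false :: b)) ∧ ∀ b ∈ branches r, P (true :: b) := by
  simp only [branches, List.forall_mem_append, List.forall_mem_map]

lemma isWeightFn_node_iff {x : X} {l r : BTree X} {w : List Bool → Bool → ℝ} :
    IsWeightFn (node x l r) w ↔
      (0 ≤ w [] false ∧ 0 ≤ w [] true ∧ w [] false + w [] true = 1) ∧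
        IsWeightFn l (fun p => w (false :: p)) ∧ IsWeightFn r (fun p => w (true :: p)) := by
  simp only [IsWeightFn, nodePaths, List.forall_mem_cons, List.forall_mem_append,
    List.forall_mem_map]

lemma branchExpect_branchWeight {t : BTree X} {w : List Bool → Bool → ℝ} (hw : IsWeightFn t w) :
    branchExpect t (branchWeight w) = E t / 2 := by
  induction t generalizing w with
  | leaf => simp [branchExpect_leaf, branchWeight, E_leaf]
  | node x l r ihl ihr =>
    obtain ⟨⟨-, -, hroot⟩, hwl, hwr⟩ := isWeightFn_node_iff.mp hw
    simp only [branchExpect_node, branchWeight_cons, branchExpect_add, branchExpect_const,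
      ihl hwl, ihr hwr, E_node]
    linarith

lemma eq_half_E_of_branchWeight_eq {t : BTree X} {w : List Bool → Bool → ℝ} {c : ℝ}
    (hw : IsWeightFn t w) (h : ∀ b ∈ branches t, branchWeight w b = c) : c = E t / 2 := by
  rw [← branchExpect_branchWeight hw, branchExpect_congr h, branchExpect_const]

def joinWeight (a : ℝ) (wl wr : List Bool → Bool → ℝ) : List Bool → Bool → ℝ
  | [], false => a
  | [], true => 1 - a
  | false :: p, d => wl p d
  | true :: p, d => wr p d

lemma quasiBalanced_leaf : QuasiBalanced (leaf : BTree X) :=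
  ⟨fun _ _ => 0, by simp [IsWeightFn, nodePaths], by simp [branches, branchWeight, E_leaf]⟩

lemma QuasiBalanced.of_node {x : X} {l r : BTree X} (h : QuasiBalanced (node x l r)) :
    E l ≤ E (node x l r) ∧ E r ≤ E (node x l r) ∧ QuasiBalanced l ∧ QuasiBalanced r := by
  obtain ⟨w, hw, hb⟩ := h
  obtain ⟨⟨hw₀, hw₁, -⟩, hwl, hwr⟩ := isWeightFn_node_iff.mp hw
  simp only [forall_mem_branches_node, branchWeight_cons, ← eq_sub_iff_add_eq'] at hb
  have hEl := eq_half_E_of_branchWeight_eq hwl hb.1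
  have hEr := eq_half_E_of_branchWeight_eq hwr hb.2
  exact ⟨by linarith, by linarith, ⟨_, hwl, hEl ▸ hb.1⟩, ⟨_, hwr, hEr ▸ hb.2⟩⟩

lemma quasiBalanced_node {x : X} {l r : BTree X} (hEl : E l ≤ E (node x l r))
    (hEr : E r ≤ E (node x l r)) (hl : QuasiBalanced l) (hr : QuasiBalanced r) :
    QuasiBalanced (node x l r) := by
  obtain ⟨wl, hwl, hbl⟩ := hl
  obtain ⟨wr, hwr, hbr⟩ := hr
  have hE := E_node x l r
  refine ⟨joinWeight ((E (node x l r) - E l) / 2) wl wr, ?_, ?_⟩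
  · exact isWeightFn_node_iff.mpr ⟨⟨by simp only [joinWeight]; linarith,
      by simp only [joinWeight]; linarith, by simp only [joinWeight]; ring⟩, hwl, hwr⟩
  · refine forall_mem_branches_node.mpr ⟨fun b hb => ?_, fun b hb => ?_⟩
    · rw [branchWeight_cons, show (fun p => joinWeight _ wl wr (false :: p)) = wl from rfl,
        hbl b hb]
      simp only [joinWeight]
      ring
    · rw [branchWeight_cons, show (fun p => joinWeight _ wl wr (true :: p)) = wr from rfl,
        hbr b hb]
      simp only [joinWeight]
      linarith

lemma quasiBalanced_node_iff {x : X} {l r : BTree X} :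
    QuasiBalanced (node x l r) ↔
      E l ≤ E (node x l r) ∧ E r ≤ E (node x l r) ∧ QuasiBalanced l ∧ QuasiBalanced r :=
  ⟨QuasiBalanced.of_node, fun ⟨hEl, hEr, hl, hr⟩ => quasiBalanced_node hEl hEr hl hr⟩

end BTree

/-- A finite full binary tree is quasi-balanced if and only if it is monotone. -/
theorem quasiBalanced_iff_monotone {X : Type} (T : BTree X) :
    BTree.QuasiBalanced T ↔ BTree.IsMonotone T := by
  induction T with
  | leaf => exact iff_of_true BTree.quasiBalanced_leaf trivial
  | node x l r ihl ihr => rw [BTree.quasiBalanced_node_iff, ihl, ihr]; rfl
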